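/- If the symmetrized graph (G, m, b') is χ-complete and the asymmetry condition holds (there exists C > 0 with (1/m(x)) Σ_{y∈V_x} |b(x,y) − b(y,x)|²/b'(x,y) ≤ C for all x ∈ V), then the closure of the non-symmetric Laplacian Δ is m-accretive. -/

import Mathlib

open scoped ComplexConjugate
noncomputable section

variable {V : Type*}

/-- The (non-symmetric) weighted graph Laplacian `Δf(x) = (1/m(x)) Σ_y b(x,y)(f(x)-f(y))`. -/
def lapOp (m : V → ℝ) (b : V → V → ℝ) (f : V → ℂ) (x : V) : ℂ :=
  (1 / (m x : ℂ)) * ∑' y, (b x y : ℂ) * (f x - f y)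

/-- The skew-symmetric part `B = (Δ - Δ')/2`. -/
def skewOp (m : V → ℝ) (b : V → V → ℝ) (f : V → ℂ) (x : V) : ℂ :=
  (1 / (m x : ℂ)) * ∑' y, (((b x y - b y x) / 2 : ℝ) : ℂ) * (f x - f y)

/-- The symmetrized weight `b'(x,y) = (b(x,y)+b(y,x))/2`. -/
def bsym (b : V → V → ℝ) (x y : V) : ℝ := (b x y + b y x) / 2

/-- The `ℓ²(V,m)` inner product `⟨f,g⟩ = Σ_x m(x) f(x) conj(g(x))`. -/
def gip (m : V → ℝ) (f g : V → ℂ) : ℂ := ∑' x, (m x : ℂ) * f x * conj (g x)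

/-- The squared `ℓ²(V,m)` norm. -/
def l2normSq (m : V → ℝ) (f : V → ℂ) : ℝ := ∑' x, m x * ‖f x‖ ^ 2

/-- Finitely supported functions (the domain `C_c(V)`). -/
def FinSupp (f : V → ℂ) : Prop := (Function.support f).Finite

/-- Local finiteness of the graph. -/
def LocFinGraph (b : V → V → ℝ) : Prop := ∀ x : V, {y | b x y ≠ 0 ∨ b y x ≠ 0}.Finite

/-- Kirchhoff's assumption (β): at each vertex the incoming and outgoing conductances agree. -/
def Kirchhoff (b : V → V → ℝ) : Prop := ∀ x : V, ∑' y, b x y = ∑' y, b y x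

/-- Weak connectedness of the graph. -/
def WeaklyConnected (b : V → V → ℝ) : Prop :=
  ∀ x y : V, Relation.ReflTransGen (fun u v => b u v ≠ 0 ∨ b v u ≠ 0) x y

/-- Membership in `ℓ²(V,m)`. -/
def MemL2 (m : V → ℝ) (f : V → ℂ) : Prop := Summable fun x => m x * ‖f x‖ ^ 2

/-- m-accretiveness of the closure of the operator `T` defined on `C_c(V) ⊆ ℓ²(V,m)`:
for every `λ` with `Re λ > 0`, the a-priori bound `Re(λ)‖f‖ ≤ ‖(T+λ)f‖` holds on `C_c(V)`
and the range of `T + λ` on `C_c(V)` is dense in `ℓ²(V,m)`.  (For an accretive operator this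
is equivalent to: the left open half-plane lies in the resolvent set of the closure of `T`
and `‖(closure T + λ)⁻¹‖ ≤ 1/Re(λ)`.) -/
def IsMAccretiveClosure (m : V → ℝ) (T : (V → ℂ) → V → ℂ) : Prop :=
  ∀ l : ℂ, 0 < l.re →
    (∀ f : V → ℂ, FinSupp f →
      l.re ^ 2 * l2normSq m f ≤ l2normSq m (fun x => T f x + l * f x)) ∧
    ∀ v : V → ℂ, MemL2 m v → ∀ ε : ℝ, 0 < ε →
      ∃ f : V → ℂ, FinSupp f ∧ l2normSq m (fun x => T f x + l * f x - v x) < ε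

/-- Essential self-adjointness of a symmetric operator `T` defined on `C_c(V) ⊆ ℓ²(V,m)`,
phrased as density of the ranges of `T + i` and `T - i`. -/
def EssSelfAdjointOn (m : V → ℝ) (T : (V → ℂ) → V → ℂ) : Prop :=
  ∀ l : ℂ, l = Complex.I ∨ l = -Complex.I →
    ∀ v : V → ℂ, MemL2 m v → ∀ ε : ℝ, 0 < ε →
      ∃ f : V → ℂ, FinSupp f ∧ l2normSq m (fun x => T f x + l * f x - v x) < ε

/-- χ-completeness of the weighted graph `(V,m,c)` (with symmetric weight `c`). -/
def ChiComplete (m : V → ℝ) (c : V → V → ℝ) : Prop :=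
  ∃ (Bn : ℕ → Set V) (χ : ℕ → V → ℝ) (C : ℝ), 0 < C ∧
    Monotone Bn ∧ (∀ n, (Bn n).Finite) ∧ (⋃ n, Bn n) = Set.univ ∧
    (∀ n, (Function.support (χ n)).Finite) ∧
    (∀ n x, 0 ≤ χ n x ∧ χ n x ≤ 1) ∧
    (∀ n x, x ∈ Bn n → χ n x = 1) ∧
    (∀ n x, (1 / m x) * ∑' y, c x y * |χ n x - χ n y| ^ 2 ≤ C)

/-- The asymmetry condition (hypothesis \eqref{thm-chi}):
`(1/m(x)) Σ_y |b(x,y) - b(y,x)|²/b'(x,y) ≤ C` for all `x`. -/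
def AsymCond (m : V → ℝ) (b : V → V → ℝ) (C : ℝ) : Prop :=
  ∀ x : V, (1 / m x) * ∑' y, |b x y - b y x| ^ 2 / bsym b x y ≤ C

section Aux
variable {V : Type*}

lemma re_term_aux (a c : ℂ) : ((a - c) * (starRingEnd ℂ) a).re
    = (‖a‖^2 - ‖c‖^2 + ‖a - c‖^2) / 2 := by
  simp [Complex.mul_re, Complex.conj_re, Complex.conj_im, Complex.sub_re, Complex.sub_im,
    Complex.sq_norm, Complex.normSq_apply]
  ring

lemma mul_conj_self (z : ℂ) : z * (starRingEnd ℂ) z = (‖z‖^2 : ℝ) := by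
  rw [Complex.mul_conj]; norm_cast; rw [Complex.normSq_eq_norm_sq]

variable {m : V → ℝ} {b : V → V → ℝ} {N : V → Finset V}
  (hN : ∀ x y, y ∈ N x ↔ (b x y ≠ 0 ∨ b y x ≠ 0))

section plumbing
include hN

lemma bzero_of_not_mem {x y : V} (h : y ∉ N x) : b x y = 0 := by
  by_contra hc; exact h ((hN x y).2 (Or.inl hc))

lemma bzero_of_not_mem' {x y : V} (h : y ∉ N x) : b y x = 0 := by
  by_contra hc; exact h ((hN x y).2 (Or.inr hc))

lemma mem_N_symm {x y : V} (h : y ∈ N x) : x ∈ N y := by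
  rcases (hN x y).1 h with h' | h'
  · exact (hN y x).2 (Or.inr h')
  · exact (hN y x).2 (Or.inl h')

lemma tsum_b_mul (x : V) (g : V → ℂ) :
    ∑' y, (b x y : ℂ) * g y = ∑ y ∈ N x, (b x y : ℂ) * g y :=
  tsum_eq_sum (fun y hy => by rw [bzero_of_not_mem hN hy]; simp)

lemma lapOp_eq_sum (f : V → ℂ) (x : V) :
    lapOp m b f x = (1 / (m x : ℂ)) * ∑ y ∈ N x, (b x y : ℂ) * (f x - f y) := by
  unfold lapOp; rw [tsum_b_mul hN x (fun y => f x - f y)]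

lemma tsum_b_out (x : V) : ∑' y, b x y = ∑ y ∈ N x, b x y :=
  tsum_eq_sum (fun y hy => bzero_of_not_mem hN hy)

lemma tsum_b_in (x : V) : ∑' y, b y x = ∑ y ∈ N x, b y x :=
  tsum_eq_sum (fun y hy => bzero_of_not_mem' hN hy)

lemma kirchhoff_fin (hK : Kirchhoff b) (x : V) :
    ∑ y ∈ N x, b x y = ∑ y ∈ N x, b y x := by
  rw [← tsum_b_out hN, ← tsum_b_in hN]; exact hK x

end plumbing
end Aux
section APriori
variable {V : Type*} {m : V → ℝ} {b : V → V → ℝ} {N : V → Finset V}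

lemma apriori_bound (hm : ∀ x, 0 < m x) (hb : ∀ x y, 0 ≤ b x y) (hK : Kirchhoff b)
    (hN : ∀ x y, y ∈ N x ↔ (b x y ≠ 0 ∨ b y x ≠ 0))
    (l : ℂ) (hl : 0 < l.re) (f : V → ℂ) (hf : FinSupp f) :
    l.re ^ 2 * l2normSq m f ≤ l2normSq m (fun x => lapOp m b f x + l * f x) := by
  classical
  set g : V → ℂ := fun x => lapOp m b f x + l * f x with hg
  set Fs : Finset V := hf.toFinset with hFs
  set F : Finset V := Fs ∪ Fs.biUnion N with hF
  have hmemFs : ∀ x, f x ≠ 0 → x ∈ Fs := fun x hx => hf.mem_toFinset.2 hx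
  have hfz : ∀ x, x ∉ F → f x = 0 := by
    intro x hx
    by_contra hc
    exact hx (Finset.mem_union_left _ (hmemFs x hc))
  have hNsub : ∀ x ∈ Fs, N x ⊆ F := by
    intro x hx y hy
    exact Finset.mem_union_right _ (Finset.mem_biUnion.2 ⟨x, hx, hy⟩)
  -- lapOp vanishes off F
  have hlapz : ∀ x, x ∉ F → lapOp m b f x = 0 := by
    intro x hx
    rw [lapOp_eq_sum hN]
    have : ∑ y ∈ N x, (b x y : ℂ) * (f x - f y) = 0 := by
      apply Finset.sum_eq_zero
      intro y hy
      rcases eq_or_ne (b x y) 0 with h0 | h0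
      · rw [h0]; simp
      · have hyx : f y = 0 := by
          by_contra hc
          exact hx (Finset.mem_union_right _
            (Finset.mem_biUnion.2 ⟨y, hmemFs y hc, mem_N_symm hN ((hN x y).2 (Or.inl h0))⟩))
        rw [hfz x hx, hyx]; simp
    rw [this, mul_zero]
  have hgz : ∀ x, x ∉ F → g x = 0 := by
    intro x hx; rw [hg]; simp only; rw [hlapz x hx, hfz x hx, mul_zero, add_zero]
  -- norms as finite sums
  have hnf : l2normSq m f = ∑ x ∈ F, m x * ‖f x‖ ^ 2 := by
    apply tsum_eq_sum
    intro x hx; rw [hfz x hx]; simp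
  have hng : l2normSq m g = ∑ x ∈ F, m x * ‖g x‖ ^ 2 := by
    apply tsum_eq_sum
    intro x hx; rw [hgz x hx]; simp
  set nf : ℝ := ∑ x ∈ F, m x * ‖f x‖ ^ 2 with hnfdef
  set L : ℝ := ∑ x ∈ F, m x * ‖g x‖ ^ 2 with hLdef
  have hnf0 : 0 ≤ nf := Finset.sum_nonneg fun x _ => mul_nonneg (hm x).le (sq_nonneg _)
  -- the quadratic form
  set SΔ : ℂ := ∑ x ∈ F, ∑ y ∈ F, (b x y : ℂ) * (f x - f y) * (starRingEnd ℂ) (f x) with hSd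
  have key1 : ∑ x ∈ F, (m x : ℂ) * lapOp m b f x * (starRingEnd ℂ) (f x) = SΔ := by
    rw [hSd]
    apply Finset.sum_congr rfl
    intro x hx
    rcases eq_or_ne (f x) 0 with h0 | h0
    · simp [h0]
    · have hxFs : x ∈ Fs := hmemFs x h0
      rw [lapOp_eq_sum hN]
      have hmx : (m x : ℂ) ≠ 0 := by
        exact_mod_cast (hm x).ne'
      rw [← mul_assoc, mul_one_div, div_self hmx, one_mul]
      rw [Finset.sum_mul]
      apply Finset.sum_subset (hNsub x hxFs)
      intro y _ hy
      rw [bzero_of_not_mem hN hy]; simp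
  -- Kirchhoff swap
  have key2 : ∑ x ∈ F, ∑ y ∈ F, b x y * ‖f x‖ ^ 2 = ∑ x ∈ F, ∑ y ∈ F, b x y * ‖f y‖ ^ 2 := by
    have step1 : ∀ x ∈ F, ∑ y ∈ F, b x y * ‖f x‖ ^ 2 = ∑ y ∈ F, b y x * ‖f x‖ ^ 2 := by
      intro x _
      rcases eq_or_ne (f x) 0 with h0 | h0
      · simp [h0]
      · have hxFs : x ∈ Fs := hmemFs x h0
        rw [← Finset.sum_mul, ← Finset.sum_mul]
        congr 1
        have e1 : ∑ y ∈ N x, b x y = ∑ y ∈ F, b x y :=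
          Finset.sum_subset (hNsub x hxFs) (fun y _ hy => bzero_of_not_mem hN hy)
        have e2 : ∑ y ∈ N x, b y x = ∑ y ∈ F, b y x :=
          Finset.sum_subset (hNsub x hxFs) (fun y _ hy => bzero_of_not_mem' hN hy)
        rw [← e1, ← e2]
        exact kirchhoff_fin hN hK x
    calc ∑ x ∈ F, ∑ y ∈ F, b x y * ‖f x‖ ^ 2 = ∑ x ∈ F, ∑ y ∈ F, b y x * ‖f x‖ ^ 2 :=
          Finset.sum_congr rfl step1
    _ = ∑ y ∈ F, ∑ x ∈ F, b y x * ‖f x‖ ^ 2 := Finset.sum_comm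
    _ = ∑ x ∈ F, ∑ y ∈ F, b x y * ‖f y‖ ^ 2 := rfl
  -- real part of SΔ
  have key3 : SΔ.re = (∑ x ∈ F, ∑ y ∈ F, b x y * ‖f x - f y‖ ^ 2) / 2 := by
    rw [hSd, Complex.re_sum]
    have : ∀ x ∈ F, (∑ y ∈ F, (b x y : ℂ) * (f x - f y) * (starRingEnd ℂ) (f x)).re
        = ∑ y ∈ F, b x y * ((‖f x‖^2 - ‖f y‖^2 + ‖f x - f y‖^2) / 2) := by
      intro x _
      rw [Complex.re_sum]
      apply Finset.sum_congr rfl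
      intro y _
      rw [mul_assoc, ← re_term_aux (f x) (f y)]
      simp [Complex.mul_re]
    rw [Finset.sum_congr rfl this]
    have expand : ∀ x ∈ F, ∑ y ∈ F, b x y * ((‖f x‖^2 - ‖f y‖^2 + ‖f x - f y‖^2) / 2)
        = ((∑ y ∈ F, b x y * ‖f x‖^2) - (∑ y ∈ F, b x y * ‖f y‖^2)
            + ∑ y ∈ F, b x y * ‖f x - f y‖^2) / 2 := by
      intro x _
      have hterm : ∀ y ∈ F, b x y * ((‖f x‖^2 - ‖f y‖^2 + ‖f x - f y‖^2) / 2)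
          = (b x y * ‖f x‖^2 - b x y * ‖f y‖^2 + b x y * ‖f x - f y‖^2) / 2 :=
        fun y _ => by ring
      rw [Finset.sum_congr rfl hterm, ← Finset.sum_div, Finset.sum_add_distrib,
        Finset.sum_sub_distrib]
    rw [Finset.sum_congr rfl expand, ← Finset.sum_div, Finset.sum_add_distrib,
      Finset.sum_sub_distrib, key2]
    ring
  have hSdre : 0 ≤ SΔ.re := by
    rw [key3]
    apply div_nonneg _ (by norm_num)
    exact Finset.sum_nonneg fun x _ => Finset.sum_nonneg fun y _ =>
      mul_nonneg (hb x y) (sq_nonneg _)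
  -- the pairing
  have keyG : (∑ x ∈ F, (m x : ℂ) * g x * (starRingEnd ℂ) (f x)) = SΔ + l * (nf : ℂ) := by
    have : ∀ x ∈ F, (m x : ℂ) * g x * (starRingEnd ℂ) (f x)
        = (m x : ℂ) * lapOp m b f x * (starRingEnd ℂ) (f x)
          + l * ((m x * ‖f x‖^2 : ℝ) : ℂ) := by
      intro x _
      rw [hg]
      simp only
      have : (m x : ℂ) * (lapOp m b f x + l * f x) * (starRingEnd ℂ) (f x)
          = (m x : ℂ) * lapOp m b f x * (starRingEnd ℂ) (f x)
            + l * ((m x : ℂ) * (f x * (starRingEnd ℂ) (f x))) := by ring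
      rw [this, mul_conj_self (f x)]
      push_cast
      ring_nf
    rw [Finset.sum_congr rfl this, Finset.sum_add_distrib, key1, ← Finset.mul_sum]
    congr 1
    rw [← Complex.ofReal_sum]
  -- lower bound on real part
  have hlow : l.re * nf ≤ (∑ x ∈ F, (m x : ℂ) * g x * (starRingEnd ℂ) (f x)).re := by
    rw [keyG]
    rw [Complex.add_re]
    have : (l * (nf : ℂ)).re = l.re * nf := by
      rw [Complex.mul_re]; simp
    rw [this]
    linarith
  -- upper bound via Cauchy-Schwarz
  have hup : (∑ x ∈ F, (m x : ℂ) * g x * (starRingEnd ℂ) (f x)).re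
      ≤ ∑ x ∈ F, (Real.sqrt (m x) * ‖g x‖) * (Real.sqrt (m x) * ‖f x‖) := by
    rw [Complex.re_sum]
    apply Finset.sum_le_sum
    intro x _
    calc ((m x : ℂ) * g x * (starRingEnd ℂ) (f x)).re
        ≤ ‖(m x : ℂ) * g x * (starRingEnd ℂ) (f x)‖ := Complex.re_le_norm _
      _ = m x * ‖g x‖ * ‖f x‖ := by
          rw [norm_mul, norm_mul]
          simp [abs_of_pos (hm x)]
      _ = (Real.sqrt (m x) * ‖g x‖) * (Real.sqrt (m x) * ‖f x‖) := by
          rw [show (Real.sqrt (m x) * ‖g x‖) * (Real.sqrt (m x) * ‖f x‖)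
            = (Real.sqrt (m x) * Real.sqrt (m x)) * ‖g x‖ * ‖f x‖ by ring]
          rw [Real.mul_self_sqrt (hm x).le]
  have hCS : (∑ x ∈ F, (Real.sqrt (m x) * ‖g x‖) * (Real.sqrt (m x) * ‖f x‖)) ^ 2
      ≤ L * nf := by
    calc (∑ x ∈ F, (Real.sqrt (m x) * ‖g x‖) * (Real.sqrt (m x) * ‖f x‖)) ^ 2
        ≤ (∑ x ∈ F, (Real.sqrt (m x) * ‖g x‖)^2) * ∑ x ∈ F, (Real.sqrt (m x) * ‖f x‖)^2 :=
          Finset.sum_mul_sq_le_sq_mul_sq F _ _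
      _ = L * nf := by
          congr 1 <;> · apply Finset.sum_congr rfl
                        intro x _
                        rw [mul_pow, Real.sq_sqrt (hm x).le]
  -- combine
  rw [hnf, hng]
  rcases eq_or_lt_of_le hnf0 with h0 | h0
  · rw [← h0, mul_zero]
    rw [hLdef]
    exact Finset.sum_nonneg fun x _ => mul_nonneg (hm x).le (sq_nonneg _)
  · have h1 : l.re * nf ≤ ∑ x ∈ F, (Real.sqrt (m x) * ‖g x‖) * (Real.sqrt (m x) * ‖f x‖) :=
      le_trans hlow hup
    have h2 : (l.re * nf) ^ 2 ≤ L * nf := by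
      refine le_trans (pow_le_pow_left₀ ?_ h1 2) hCS
      positivity
    have h3 : (l.re ^ 2 * nf) * nf ≤ L * nf := by
      calc (l.re ^ 2 * nf) * nf = (l.re * nf)^2 := by ring
        _ ≤ L * nf := h2
    exact le_of_mul_le_mul_right h3 h0

end APriori
section CutoffKey
variable {V : Type*} {m : V → ℝ} {b : V → V → ℝ} {N : V → Finset V}

lemma young_skew (s' b' dw wn : ℝ) (hb' : 0 ≤ b') (h0 : b' = 0 → s' = 0)
    (hdw : 0 ≤ dw) (hwn : 0 ≤ wn) :
    |s'| * dw * wn ≤ 1/8*(b'*dw^2) + 2*(s'^2/b'*wn^2) := by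
  rcases eq_or_lt_of_le hb' with h | h
  · rw [h0 h.symm, ← h]
    simp
  · have key : b' * (|s'| * dw * wn) ≤ b' * (1/8*(b'*dw^2) + 2*(s'^2/b'*wn^2)) := by
      have hexp : b' * (2*(s'^2/b'*wn^2)) = 2*s'^2*wn^2 := by
        field_simp
      rw [mul_add, hexp]
      nlinarith [sq_nonneg (b'*dw - 4*(abs s' * wn)), sq_abs s']
    exact le_of_mul_le_mul_left key h

lemma young_e (a c : ℝ) : a * c ≤ 1/8*a^2 + 2*c^2 := by nlinarith [sq_nonneg (a - 4*c)]

lemma young_half (a c : ℝ) : a * c ≤ 1/2*a^2 + 1/2*c^2 := by nlinarith [sq_nonneg (a - c)]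

lemma norm_sub_sq_le (a c : ℂ) : ‖a - c‖^2 ≤ 2*‖a‖^2 + 2*‖c‖^2 := by
  have h := norm_sub_le a c
  nlinarith [sq_nonneg (‖a‖ - ‖c‖), norm_nonneg (a - c), norm_nonneg a, norm_nonneg c]

lemma bsym_symm (b : V → V → ℝ) (x y : V) : bsym b x y = bsym b y x := by
  unfold bsym; ring

lemma bsym_nonneg (hb : ∀ x y, 0 ≤ b x y) (x y : V) : 0 ≤ bsym b x y := by
  have := hb x y; have := hb y x; unfold bsym; linarith


lemma chi_ineq (a c : ℝ) (ha : 0 ≤ a) : a^2 ≤ c*a + (1/2*a^2 + 1/2*|a - c|^2) := by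
  nlinarith [mul_le_mul_of_nonneg_left (le_abs_self (a - c)) ha, sq_nonneg (a - |a - c|),
    sq_abs (a - c)]

lemma cutoff_key (hm : ∀ x, 0 < m x) (hb : ∀ x y, 0 ≤ b x y)
    (hN : ∀ x y, y ∈ N x ↔ (b x y ≠ 0 ∨ b y x ≠ 0))
    (C : ℝ) (hasym : AsymCond m b C)
    (χ : V → ℝ) (hχfin : (Function.support χ).Finite)
    (hχ01 : ∀ x, 0 ≤ χ x ∧ χ x ≤ 1)
    (Cχ : ℝ) (hCχ : 0 < Cχ)
    (hχbd : ∀ x, (1 / m x) * ∑' y, bsym b x y * |χ x - χ y| ^ 2 ≤ Cχ)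
    (D : Set V) (hD1 : ∀ x ∈ D, χ x = 1)
    (μ : ℂ) (w : V → ℂ)
    (hw : Summable fun x => m x * ‖w x‖ ^ 2)
    (heq : ∀ c, (∑ y ∈ N c, (b y c : ℂ) * (w c - w y)) + μ * (m c : ℂ) * w c = 0)
    (τ : V → ℝ) (hτ0 : ∀ z, 0 ≤ τ z) (hτs : Summable τ)
    (hτge : ∀ z, ¬(z ∈ D ∧ ∀ y ∈ N z, y ∈ D) → m z * ‖w z‖^2 ≤ τ z)
    [DecidableEq V] :
    (μ.re - C/2) *
      (∑ z ∈ hχfin.toFinset ∪ hχfin.toFinset.biUnion N, m z * χ z^2 * ‖w z‖^2)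
    ≤ 3 * Cχ * ∑' z, τ z := by
  classical
  set G : Finset V := hχfin.toFinset ∪ hχfin.toFinset.biUnion N with hG
  have hχz : ∀ z, z ∉ G → χ z = 0 := by
    intro z hz
    by_contra hc
    exact hz (Finset.mem_union_left _ (hχfin.mem_toFinset.2 hc))
  have hNsub : ∀ z, χ z ≠ 0 → N z ⊆ G := by
    intro z hz y hy
    exact Finset.mem_union_right _
      (Finset.mem_biUnion.2 ⟨z, hχfin.mem_toFinset.2 hz, hy⟩)
  -- real quantities
  set Nn : ℝ := ∑ z ∈ G, m z * χ z^2 * ‖w z‖^2 with hNn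
  set Q : ℝ := ∑ z ∈ G, ∑ y ∈ G, bsym b y z * (χ y * χ z) * ‖w z - w y‖^2 with hQ
  set P : ℝ := ∑ z ∈ G, ∑ y ∈ G, bsym b y z * χ z^2 * ‖w z - w y‖^2 with hP
  set R : ℝ := ∑ z ∈ G, ∑ y ∈ G, bsym b y z * |χ z - χ y|^2 * ‖w z‖^2 with hR
  set T : ℝ := ∑ z ∈ G, ∑ y ∈ G, ((b y z - b z y)/2)^2 / bsym b y z * (χ z^2 * ‖w z‖^2) with hT
  have hQ0 : 0 ≤ Q := Finset.sum_nonneg fun z _ => Finset.sum_nonneg fun y _ =>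
    mul_nonneg (mul_nonneg (bsym_nonneg hb _ _)
      (mul_nonneg (hχ01 y).1 (hχ01 z).1)) (sq_nonneg _)
  have hNn0 : 0 ≤ Nn := Finset.sum_nonneg fun z _ =>
    mul_nonneg (mul_nonneg (hm z).le (sq_nonneg _)) (sq_nonneg _)
  -- complex double sums
  set A : ℂ := ∑ z ∈ G, ∑ y ∈ G, (b y z : ℂ) * (w z - w y) * ((χ z : ℂ)^2 * (starRingEnd ℂ) (w z)) with hA
  set As : ℂ := ∑ z ∈ G, ∑ y ∈ G, (bsym b y z : ℂ) * (w z - w y) * ((χ z : ℂ)^2 * (starRingEnd ℂ) (w z)) with hAs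
  set Ask : ℂ := ∑ z ∈ G, ∑ y ∈ G, (((b y z - b z y)/2 : ℝ) : ℂ) * (w z - w y) * ((χ z : ℂ)^2 * (starRingEnd ℂ) (w z)) with hAsk
  -- Step 0 : A + μ * Nn = 0
  have step0 : A + μ * (Nn : ℂ) = 0 := by
    have hper : ∀ z ∈ G,
        (∑ y ∈ G, (b y z : ℂ) * (w z - w y) * ((χ z : ℂ)^2 * (starRingEnd ℂ) (w z)))
        + μ * ((m z * χ z^2 * ‖w z‖^2 : ℝ) : ℂ) = 0 := by
      intro z _
      rcases eq_or_ne (χ z) 0 with h0 | h0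
      · simp [h0]
      · have hsum : ∑ y ∈ G, (b y z : ℂ) * (w z - w y) * ((χ z : ℂ)^2 * (starRingEnd ℂ) (w z))
            = (∑ y ∈ N z, (b y z : ℂ) * (w z - w y)) * ((χ z : ℂ)^2 * (starRingEnd ℂ) (w z)) := by
          rw [Finset.sum_mul]
          refine (Finset.sum_subset (hNsub z h0) ?_).symm
          intro y _ hy
          rw [bzero_of_not_mem' hN hy]
          simp
        rw [hsum]
        have hc : μ * ((m z * χ z^2 * ‖w z‖^2 : ℝ) : ℂ)
            = μ * (m z : ℂ) * w z * ((χ z : ℂ)^2 * (starRingEnd ℂ) (w z)) := by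
          rw [show ((m z * χ z^2 * ‖w z‖^2 : ℝ) : ℂ)
              = (m z : ℂ) * (χ z : ℂ)^2 * ((‖w z‖^2 : ℝ) : ℂ) by push_cast; ring,
            ← mul_conj_self (w z)]
          ring
        rw [hc]
        calc (∑ y ∈ N z, (b y z : ℂ) * (w z - w y)) * ((χ z:ℂ)^2 * (starRingEnd ℂ) (w z))
              + μ * (m z : ℂ) * w z * ((χ z:ℂ)^2 * (starRingEnd ℂ) (w z))
            = ((∑ y ∈ N z, (b y z : ℂ) * (w z - w y)) + μ * (m z : ℂ) * w z)
                * ((χ z:ℂ)^2 * (starRingEnd ℂ) (w z)) := by ring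
          _ = 0 := by rw [heq z, zero_mul]
    have : A + μ * (Nn : ℂ)
        = ∑ z ∈ G, ((∑ y ∈ G, (b y z : ℂ) * (w z - w y) * ((χ z : ℂ)^2 * (starRingEnd ℂ) (w z)))
            + μ * ((m z * χ z^2 * ‖w z‖^2 : ℝ) : ℂ)) := by
      rw [Finset.sum_add_distrib, ← hA, ← Finset.mul_sum, ← Complex.ofReal_sum, ← hNn]
    rw [this]
    exact Finset.sum_eq_zero hper
  -- Step 1 : A = As + Ask
  have step1 : A = As + Ask := by
    rw [hA, hAs, hAsk, ← Finset.sum_add_distrib]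
    apply Finset.sum_congr rfl; intro z _
    rw [← Finset.sum_add_distrib]
    apply Finset.sum_congr rfl; intro y _
    have : (b y z : ℂ) = ((bsym b y z : ℝ) : ℂ) + (((b y z - b z y)/2 : ℝ) : ℂ) := by
      unfold bsym; push_cast; ring
    rw [this]; ring

  -- Step 2 : symmetrize As
  have hswapAs : As = ∑ z ∈ G, ∑ y ∈ G,
      (bsym b z y : ℂ) * (w y - w z) * ((χ y : ℂ)^2 * (starRingEnd ℂ) (w y)) := by
    rw [hAs]; exact Finset.sum_comm
  have h2As : As + As = ∑ z ∈ G, ∑ y ∈ G, (bsym b y z : ℂ) * (w z - w y) *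
      ((χ z : ℂ)^2 * (starRingEnd ℂ) (w z) - (χ y : ℂ)^2 * (starRingEnd ℂ) (w y)) := by
    nth_rewrite 2 [hswapAs]
    rw [hAs, ← Finset.sum_add_distrib]
    refine Finset.sum_congr rfl fun z _ => ?_
    rw [← Finset.sum_add_distrib]
    refine Finset.sum_congr rfl fun y _ => ?_
    rw [bsym_symm b z y]
    ring
  -- split into Q part and E2 part
  set E2 : ℂ := ∑ z ∈ G, ∑ y ∈ G, (bsym b y z : ℂ) * (w z - w y) *
      (((χ z : ℂ) - (χ y : ℂ)) * ((χ z : ℂ) * (starRingEnd ℂ) (w z)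
        + (χ y : ℂ) * (starRingEnd ℂ) (w y))) with hE2
  have hsplit : As + As = (Q : ℂ) + E2 := by
    rw [h2As, hE2, hQ]
    rw [Complex.ofReal_sum, ← Finset.sum_add_distrib]
    refine Finset.sum_congr rfl fun z _ => ?_
    rw [Complex.ofReal_sum, ← Finset.sum_add_distrib]
    refine Finset.sum_congr rfl fun y _ => ?_
    rw [show ((bsym b y z * (χ y * χ z) * ‖w z - w y‖^2 : ℝ) : ℂ)
        = (bsym b y z : ℂ) * ((χ y : ℂ) * (χ z : ℂ)) * ((‖w z - w y‖^2 : ℝ) : ℂ) by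
          push_cast; ring,
      ← mul_conj_self (w z - w y), map_sub]
    ring
  -- skew symmetrization
  have hswapAsk : Ask = ∑ z ∈ G, ∑ y ∈ G,
      (((b z y - b y z)/2 : ℝ) : ℂ) * (w y - w z) * ((χ y : ℂ)^2 * (starRingEnd ℂ) (w y)) := by
    rw [hAsk]; exact Finset.sum_comm
  have h2Ask : Ask + Ask = ∑ z ∈ G, ∑ y ∈ G, (((b y z - b z y)/2 : ℝ) : ℂ) * (w z - w y) *
      ((χ z : ℂ)^2 * (starRingEnd ℂ) (w z) + (χ y : ℂ)^2 * (starRingEnd ℂ) (w y)) := by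
    nth_rewrite 2 [hswapAsk]
    rw [hAsk, ← Finset.sum_add_distrib]
    refine Finset.sum_congr rfl fun z _ => ?_
    rw [← Finset.sum_add_distrib]
    refine Finset.sum_congr rfl fun y _ => ?_
    push_cast
    ring
  -- real-part bookkeeping
  have hAre : A.re + μ.re * Nn = 0 := by
    have h := congrArg Complex.re step0
    simpa [Complex.add_re, Complex.mul_re] using h
  have h2Asre : As.re + As.re = Q + E2.re := by
    have h := congrArg Complex.re hsplit
    simpa [Complex.add_re] using h
  have hstep1re : A.re = As.re + Ask.re := by rw [step1, Complex.add_re]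
  have hmain : 2 * μ.re * Nn + Q = -E2.re - (Ask + Ask).re := by
    rw [Complex.add_re]
    linarith
  have habs : 2 * μ.re * Nn + Q ≤ ‖E2‖ + ‖Ask + Ask‖ := by
    rw [hmain]
    have h1 : -E2.re ≤ ‖E2‖ := by
      calc -E2.re ≤ |E2.re| := neg_le_abs _
        _ ≤ ‖E2‖ := Complex.abs_re_le_norm E2
    have h2 : -(Ask + Ask).re ≤ ‖Ask + Ask‖ := by
      calc -(Ask + Ask).re ≤ |(Ask + Ask).re| := neg_le_abs _
        _ ≤ ‖Ask + Ask‖ := Complex.abs_re_le_norm _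
    linarith
  -- norm bound for E2
  set U1 : ℝ := ∑ z ∈ G, ∑ y ∈ G,
      bsym b y z * ‖w z - w y‖ * |χ z - χ y| * (χ z * ‖w z‖) with hU1
  set U2 : ℝ := ∑ z ∈ G, ∑ y ∈ G,
      bsym b y z * ‖w z - w y‖ * |χ z - χ y| * (χ y * ‖w y‖) with hU2
  have hU21 : U2 = U1 := by
    rw [hU2, hU1]
    rw [show (∑ z ∈ G, ∑ y ∈ G, bsym b y z * ‖w z - w y‖ * |χ z - χ y| * (χ y * ‖w y‖))
        = ∑ z ∈ G, ∑ y ∈ G, bsym b z y * ‖w y - w z‖ * |χ y - χ z| * (χ z * ‖w z‖)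
      from Finset.sum_comm]
    refine Finset.sum_congr rfl fun z _ => Finset.sum_congr rfl fun y _ => ?_
    rw [bsym_symm b z y, norm_sub_rev, abs_sub_comm]
  have hE2norm : ‖E2‖ ≤ U1 + U2 := by
    rw [hE2, hU1, hU2, ← Finset.sum_add_distrib]
    refine le_trans (norm_sum_le _ _) (Finset.sum_le_sum fun z _ => ?_)
    rw [← Finset.sum_add_distrib]
    refine le_trans (norm_sum_le _ _) (Finset.sum_le_sum fun y _ => ?_)
    rw [norm_mul, norm_mul, norm_mul]
    have e1 : ‖((bsym b y z : ℝ) : ℂ)‖ = bsym b y z := by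
      rw [Complex.norm_real, Real.norm_eq_abs, abs_of_nonneg (bsym_nonneg hb y z)]
    have e2 : ‖(χ z : ℂ) - (χ y : ℂ)‖ = |χ z - χ y| := by
      rw [← Complex.ofReal_sub, Complex.norm_real, Real.norm_eq_abs]
    have e3 : ‖(χ z : ℂ) * (starRingEnd ℂ) (w z) + (χ y : ℂ) * (starRingEnd ℂ) (w y)‖
        ≤ χ z * ‖w z‖ + χ y * ‖w y‖ := by
      refine le_trans (norm_add_le _ _) ?_
      rw [norm_mul, norm_mul, RCLike.norm_conj, RCLike.norm_conj,
        Complex.norm_real (χ z), Real.norm_eq_abs (χ z), abs_of_nonneg (hχ01 z).1,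
        Complex.norm_real (χ y), Real.norm_eq_abs (χ y), abs_of_nonneg (hχ01 y).1]
    rw [e1, e2]
    calc bsym b y z * ‖w z - w y‖ * (|χ z - χ y| *
          ‖(χ z : ℂ) * (starRingEnd ℂ) (w z) + (χ y : ℂ) * (starRingEnd ℂ) (w y)‖)
        ≤ bsym b y z * ‖w z - w y‖ * (|χ z - χ y| * (χ z * ‖w z‖ + χ y * ‖w y‖)) := by
          have hb0 : 0 ≤ bsym b y z * ‖w z - w y‖ :=
            mul_nonneg (bsym_nonneg hb y z) (norm_nonneg _)
          exact mul_le_mul_of_nonneg_left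
            (mul_le_mul_of_nonneg_left e3 (abs_nonneg _)) hb0
      _ = bsym b y z * ‖w z - w y‖ * |χ z - χ y| * (χ z * ‖w z‖)
          + bsym b y z * ‖w z - w y‖ * |χ z - χ y| * (χ y * ‖w y‖) := by ring
  have hU1bd : U1 ≤ 1/8 * P + 2 * R := by
    have hptwise : ∀ z ∈ G, ∀ y ∈ G,
        bsym b y z * ‖w z - w y‖ * |χ z - χ y| * (χ z * ‖w z‖)
        ≤ 1/8 * (bsym b y z * χ z^2 * ‖w z - w y‖^2)
          + 2 * (bsym b y z * |χ z - χ y|^2 * ‖w z‖^2) := by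
      intro z _ y _
      have := young_e (χ z * ‖w z - w y‖) (|χ z - χ y| * ‖w z‖)
      have hb0 : 0 ≤ bsym b y z := bsym_nonneg hb y z
      calc bsym b y z * ‖w z - w y‖ * |χ z - χ y| * (χ z * ‖w z‖)
          = bsym b y z * ((χ z * ‖w z - w y‖) * (|χ z - χ y| * ‖w z‖)) := by ring
        _ ≤ bsym b y z * (1/8 * (χ z * ‖w z - w y‖)^2 + 2 * (|χ z - χ y| * ‖w z‖)^2) :=
            mul_le_mul_of_nonneg_left this hb0
        _ = 1/8 * (bsym b y z * χ z^2 * ‖w z - w y‖^2)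
            + 2 * (bsym b y z * |χ z - χ y|^2 * ‖w z‖^2) := by ring
    calc U1 ≤ ∑ z ∈ G, ∑ y ∈ G, (1/8 * (bsym b y z * χ z^2 * ‖w z - w y‖^2)
          + 2 * (bsym b y z * |χ z - χ y|^2 * ‖w z‖^2)) := by
          rw [hU1]
          exact Finset.sum_le_sum fun z hz => Finset.sum_le_sum fun y hy => hptwise z hz y hy
      _ = 1/8 * P + 2 * R := by
          rw [hP, hR, Finset.mul_sum, Finset.mul_sum, ← Finset.sum_add_distrib]
          refine Finset.sum_congr rfl fun z _ => ?_
          rw [Finset.mul_sum, Finset.mul_sum, ← Finset.sum_add_distrib]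
  -- norm bound for Ask + Ask
  set U3 : ℝ := ∑ z ∈ G, ∑ y ∈ G,
      |(b y z - b z y)/2| * ‖w z - w y‖ * (χ z^2 * ‖w z‖) with hU3
  have hAsknorm : ‖Ask + Ask‖ ≤ U3 + U3 := by
    have hU4 : U3 = ∑ z ∈ G, ∑ y ∈ G,
        |(b y z - b z y)/2| * ‖w z - w y‖ * (χ y^2 * ‖w y‖) := by
      rw [hU3]
      rw [show (∑ z ∈ G, ∑ y ∈ G, |(b y z - b z y)/2| * ‖w z - w y‖ * (χ z^2 * ‖w z‖))
          = ∑ z ∈ G, ∑ y ∈ G, |(b z y - b y z)/2| * ‖w y - w z‖ * (χ y^2 * ‖w y‖)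
        from Finset.sum_comm]
      refine Finset.sum_congr rfl fun z _ => Finset.sum_congr rfl fun y _ => ?_
      rw [norm_sub_rev, show (b z y - b y z)/2 = -((b y z - b z y)/2) by ring, abs_neg]
    calc ‖Ask + Ask‖ ≤ ∑ z ∈ G, ∑ y ∈ G,
        (|(b y z - b z y)/2| * ‖w z - w y‖ * (χ z^2 * ‖w z‖)
          + |(b y z - b z y)/2| * ‖w z - w y‖ * (χ y^2 * ‖w y‖)) := by
          rw [h2Ask]
          refine le_trans (norm_sum_le _ _) (Finset.sum_le_sum fun z _ => ?_)
          refine le_trans (norm_sum_le _ _) (Finset.sum_le_sum fun y _ => ?_)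
          rw [norm_mul, norm_mul]
          have e1 : ‖(((b y z - b z y)/2 : ℝ) : ℂ)‖ = |(b y z - b z y)/2| := by
            rw [Complex.norm_real, Real.norm_eq_abs]
          have e3 : ‖(χ z : ℂ)^2 * (starRingEnd ℂ) (w z) + (χ y : ℂ)^2 * (starRingEnd ℂ) (w y)‖
              ≤ χ z^2 * ‖w z‖ + χ y^2 * ‖w y‖ := by
            refine le_trans (norm_add_le _ _) ?_
            rw [norm_mul, norm_mul, RCLike.norm_conj, RCLike.norm_conj, norm_pow, norm_pow,
              Complex.norm_real (χ z), Real.norm_eq_abs (χ z), abs_of_nonneg (hχ01 z).1,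
              Complex.norm_real (χ y), Real.norm_eq_abs (χ y), abs_of_nonneg (hχ01 y).1]
          rw [e1]
          calc |(b y z - b z y)/2| * ‖w z - w y‖ *
                ‖(χ z : ℂ)^2 * (starRingEnd ℂ) (w z) + (χ y : ℂ)^2 * (starRingEnd ℂ) (w y)‖
              ≤ |(b y z - b z y)/2| * ‖w z - w y‖ * (χ z^2 * ‖w z‖ + χ y^2 * ‖w y‖) := by
                exact mul_le_mul_of_nonneg_left e3
                  (mul_nonneg (abs_nonneg _) (norm_nonneg _))
            _ = |(b y z - b z y)/2| * ‖w z - w y‖ * (χ z^2 * ‖w z‖)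
                + |(b y z - b z y)/2| * ‖w z - w y‖ * (χ y^2 * ‖w y‖) := by ring
      _ = U3 + U3 := by
          nth_rewrite 2 [hU4]
          rw [hU3, ← Finset.sum_add_distrib]
          refine Finset.sum_congr rfl fun z _ => ?_
          rw [← Finset.sum_add_distrib]
  have hU3bd : U3 ≤ 1/8 * P + 2 * T := by
    have hptwise : ∀ z ∈ G, ∀ y ∈ G,
        |(b y z - b z y)/2| * ‖w z - w y‖ * (χ z^2 * ‖w z‖)
        ≤ 1/8 * (bsym b y z * χ z^2 * ‖w z - w y‖^2)
          + 2 * (((b y z - b z y)/2)^2 / bsym b y z * (χ z^2 * ‖w z‖^2)) := by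
      intro z _ y _
      have hz0 : bsym b y z = 0 → (b y z - b z y)/2 = 0 := by
        intro h
        have h1 := hb y z
        have h2 := hb z y
        have : b y z + b z y = 0 := by
          have := h
          unfold bsym at this
          linarith
        have hy0 : b y z = 0 := by linarith
        have hz0 : b z y = 0 := by linarith
        rw [hy0, hz0]; ring
      have key := young_skew ((b y z - b z y)/2) (bsym b y z) ‖w z - w y‖ ‖w z‖
        (bsym_nonneg hb y z) hz0 (norm_nonneg _) (norm_nonneg _)
      have hc2 : 0 ≤ χ z^2 := sq_nonneg _
      calc |(b y z - b z y)/2| * ‖w z - w y‖ * (χ z^2 * ‖w z‖)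
          = χ z^2 * (|(b y z - b z y)/2| * ‖w z - w y‖ * ‖w z‖) := by ring
        _ ≤ χ z^2 * (1/8*(bsym b y z * ‖w z - w y‖^2)
              + 2*(((b y z - b z y)/2)^2 / bsym b y z * ‖w z‖^2)) :=
            mul_le_mul_of_nonneg_left key hc2
        _ = 1/8 * (bsym b y z * χ z^2 * ‖w z - w y‖^2)
            + 2 * (((b y z - b z y)/2)^2 / bsym b y z * (χ z^2 * ‖w z‖^2)) := by ring
    calc U3 ≤ ∑ z ∈ G, ∑ y ∈ G, (1/8 * (bsym b y z * χ z^2 * ‖w z - w y‖^2)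
          + 2 * (((b y z - b z y)/2)^2 / bsym b y z * (χ z^2 * ‖w z‖^2))) := by
          rw [hU3]
          exact Finset.sum_le_sum fun z hz => Finset.sum_le_sum fun y hy => hptwise z hz y hy
      _ = 1/8 * P + 2 * T := by
          rw [hP, hT, Finset.mul_sum, Finset.mul_sum, ← Finset.sum_add_distrib]
          refine Finset.sum_congr rfl fun z _ => ?_
          rw [Finset.mul_sum, Finset.mul_sum, ← Finset.sum_add_distrib]
  -- bound T
  have hTbd : T ≤ C/4 * Nn := by
    rw [hT, hNn, Finset.mul_sum]
    refine Finset.sum_le_sum fun z _ => ?_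
    have hinner : ∑ y ∈ G, ((b y z - b z y)/2)^2 / bsym b y z ≤ C/4 * m z := by
      have hsummand : ∀ y, ((b y z - b z y)/2)^2 / bsym b y z
          = 1/4 * (|b z y - b y z|^2 / bsym b z y) := by
        intro y
        rw [bsym_symm b y z, sq_abs]
        ring
      have hsummable : Summable (fun y => |b z y - b y z|^2 / bsym b z y) := by
        apply summable_of_ne_finset_zero (s := N z)
        intro y hy
        rw [bzero_of_not_mem hN hy, bzero_of_not_mem' hN hy]
        simp
      have hfin : ∑ y ∈ G, |b z y - b y z|^2 / bsym b z y
          ≤ ∑' y, |b z y - b y z|^2 / bsym b z y :=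
        hsummable.sum_le_tsum G (fun y _ => div_nonneg (sq_nonneg _) (bsym_nonneg hb z y))
      have htsum : ∑' y, |b z y - b y z|^2 / bsym b z y ≤ C * m z := by
        have h := hasym z
        have hmz := hm z
        have h2 := mul_le_mul_of_nonneg_left h hmz.le
        rw [show m z * (1 / m z * ∑' y, |b z y - b y z|^2 / bsym b z y)
            = ∑' y, |b z y - b y z|^2 / bsym b z y from by field_simp] at h2
        linarith
      calc ∑ y ∈ G, ((b y z - b z y)/2)^2 / bsym b y z
          = 1/4 * ∑ y ∈ G, |b z y - b y z|^2 / bsym b z y := by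
            rw [Finset.mul_sum]
            exact Finset.sum_congr rfl fun y _ => hsummand y
        _ ≤ 1/4 * (C * m z) := by
            have := le_trans hfin htsum
            linarith
        _ = C/4 * m z := by ring
    calc ∑ y ∈ G, ((b y z - b z y)/2)^2 / bsym b y z * (χ z^2 * ‖w z‖^2)
        = (∑ y ∈ G, ((b y z - b z y)/2)^2 / bsym b y z) * (χ z^2 * ‖w z‖^2) := by
          rw [Finset.sum_mul]
      _ ≤ (C/4 * m z) * (χ z^2 * ‖w z‖^2) :=
          mul_le_mul_of_nonneg_right hinner (mul_nonneg (sq_nonneg _) (sq_nonneg _))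
      _ = C/4 * (m z * χ z^2 * ‖w z‖^2) := by ring
  -- bound R
  have hRbd : R ≤ Cχ * ∑' z, τ z := by
    have hper : ∀ z ∈ G, ∑ y ∈ G, bsym b y z * |χ z - χ y|^2 * ‖w z‖^2 ≤ Cχ * τ z := by
      intro z _
      by_cases hcond : z ∈ D ∧ ∀ y ∈ N z, y ∈ D
      · have hzero : ∀ y ∈ G, bsym b y z * |χ z - χ y|^2 * ‖w z‖^2 = 0 := by
          intro y _
          rcases eq_or_ne (bsym b y z) 0 with h0 | h0
          · rw [h0]; ring
          · have hyN : y ∈ N z := by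
              by_contra hc
              have h1 := bzero_of_not_mem hN hc
              have h2 := bzero_of_not_mem' hN hc
              exact h0 (by unfold bsym; rw [h1, h2]; ring)
            have hχy : χ y = 1 := hD1 y (hcond.2 y hyN)
            have hχz1 : χ z = 1 := hD1 z hcond.1
            rw [hχy, hχz1]; simp
        rw [Finset.sum_eq_zero hzero]
        exact mul_nonneg hCχ.le (hτ0 z)
      · have hτz := hτge z hcond
        have hsummable : Summable (fun y => bsym b z y * |χ z - χ y|^2) := by
          apply summable_of_ne_finset_zero (s := N z)
          intro y hy
          rw [show bsym b z y = 0 from by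
            unfold bsym; rw [bzero_of_not_mem hN hy, bzero_of_not_mem' hN hy]; ring]
          ring
        have hsum : ∑ y ∈ G, bsym b y z * |χ z - χ y|^2 ≤ Cχ * m z := by
          have e1 : ∑ y ∈ G, bsym b y z * |χ z - χ y|^2
              = ∑ y ∈ G, bsym b z y * |χ z - χ y|^2 :=
            Finset.sum_congr rfl fun y _ => by rw [bsym_symm b y z]
          have e2 : ∑ y ∈ G, bsym b z y * |χ z - χ y|^2
              ≤ ∑' y, bsym b z y * |χ z - χ y|^2 :=
            hsummable.sum_le_tsum G (fun y _ => mul_nonneg (bsym_nonneg hb z y) (sq_nonneg _))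
          have e3 : ∑' y, bsym b z y * |χ z - χ y|^2 ≤ Cχ * m z := by
            have h := hχbd z
            have hmz := hm z
            have h2 := mul_le_mul_of_nonneg_left h hmz.le
            rw [show m z * (1 / m z * ∑' y, bsym b z y * |χ z - χ y|^2)
                = ∑' y, bsym b z y * |χ z - χ y|^2 from by field_simp] at h2
            linarith
          rw [e1]; linarith
        calc ∑ y ∈ G, bsym b y z * |χ z - χ y|^2 * ‖w z‖^2
            = (∑ y ∈ G, bsym b y z * |χ z - χ y|^2) * ‖w z‖^2 := by rw [Finset.sum_mul]
          _ ≤ (Cχ * m z) * ‖w z‖^2 := mul_le_mul_of_nonneg_right hsum (sq_nonneg _)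
          _ = Cχ * (m z * ‖w z‖^2) := by ring
          _ ≤ Cχ * τ z := mul_le_mul_of_nonneg_left hτz hCχ.le
    calc R ≤ ∑ z ∈ G, Cχ * τ z := by rw [hR]; exact Finset.sum_le_sum hper
      _ = Cχ * ∑ z ∈ G, τ z := by rw [Finset.mul_sum]
      _ ≤ Cχ * ∑' z, τ z :=
          mul_le_mul_of_nonneg_left (hτs.sum_le_tsum G (fun z _ => hτ0 z)) hCχ.le
  -- bound P by Q and R
  set Sd : ℝ := ∑ z ∈ G, ∑ y ∈ G, bsym b y z * |χ z - χ y|^2 * ‖w z - w y‖^2 with hSd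
  have hSdbd : Sd ≤ 4 * R := by
    have hR2 : (∑ z ∈ G, ∑ y ∈ G, bsym b y z * |χ z - χ y|^2 * ‖w y‖^2) = R := by
      rw [hR]
      rw [show (∑ z ∈ G, ∑ y ∈ G, bsym b y z * |χ z - χ y|^2 * ‖w y‖^2)
          = ∑ z ∈ G, ∑ y ∈ G, bsym b z y * |χ y - χ z|^2 * ‖w z‖^2 from Finset.sum_comm]
      refine Finset.sum_congr rfl fun z _ => Finset.sum_congr rfl fun y _ => ?_
      rw [bsym_symm b z y, abs_sub_comm]
    have hpt : ∀ z ∈ G, ∀ y ∈ G, bsym b y z * |χ z - χ y|^2 * ‖w z - w y‖^2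
        ≤ 2 * (bsym b y z * |χ z - χ y|^2 * ‖w z‖^2)
          + 2 * (bsym b y z * |χ z - χ y|^2 * ‖w y‖^2) := by
      intro z _ y _
      have h1 := norm_sub_sq_le (w z) (w y)
      have h2 : 0 ≤ bsym b y z * |χ z - χ y|^2 :=
        mul_nonneg (bsym_nonneg hb y z) (sq_nonneg _)
      calc bsym b y z * |χ z - χ y|^2 * ‖w z - w y‖^2
          ≤ bsym b y z * |χ z - χ y|^2 * (2*‖w z‖^2 + 2*‖w y‖^2) :=
            mul_le_mul_of_nonneg_left h1 h2
        _ = 2 * (bsym b y z * |χ z - χ y|^2 * ‖w z‖^2)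
            + 2 * (bsym b y z * |χ z - χ y|^2 * ‖w y‖^2) := by ring
    calc Sd ≤ ∑ z ∈ G, ∑ y ∈ G, (2 * (bsym b y z * |χ z - χ y|^2 * ‖w z‖^2)
          + 2 * (bsym b y z * |χ z - χ y|^2 * ‖w y‖^2)) := by
          rw [hSd]
          exact Finset.sum_le_sum fun z hz => Finset.sum_le_sum fun y hy => hpt z hz y hy
      _ = 2 * R + 2 * (∑ z ∈ G, ∑ y ∈ G, bsym b y z * |χ z - χ y|^2 * ‖w y‖^2) := by
          rw [hR, Finset.mul_sum, Finset.mul_sum, ← Finset.sum_add_distrib]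
          refine Finset.sum_congr rfl fun z _ => ?_
          rw [Finset.mul_sum, Finset.mul_sum, ← Finset.sum_add_distrib]
      _ = 4 * R := by rw [hR2]; ring
  have hPbd : P ≤ 2 * Q + 4 * R := by
    have hstep : P ≤ Q + (1/2 * P + 1/2 * Sd) := by
      have hpt : ∀ z ∈ G, ∀ y ∈ G, bsym b y z * χ z^2 * ‖w z - w y‖^2
          ≤ bsym b y z * (χ y * χ z) * ‖w z - w y‖^2
            + (1/2 * (bsym b y z * χ z^2 * ‖w z - w y‖^2)
              + 1/2 * (bsym b y z * |χ z - χ y|^2 * ‖w z - w y‖^2)) := by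
        intro z _ y _
        have h1 := chi_ineq (χ z) (χ y) (hχ01 z).1
        have h2 : 0 ≤ bsym b y z * ‖w z - w y‖^2 :=
          mul_nonneg (bsym_nonneg hb y z) (sq_nonneg _)
        have h3 := mul_le_mul_of_nonneg_left h1 h2
        calc bsym b y z * χ z^2 * ‖w z - w y‖^2
            = (bsym b y z * ‖w z - w y‖^2) * (χ z^2) := by ring
          _ ≤ (bsym b y z * ‖w z - w y‖^2)
              * (χ y * χ z + (1/2*(χ z)^2 + 1/2*|χ z - χ y|^2)) := h3
          _ = bsym b y z * (χ y * χ z) * ‖w z - w y‖^2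
              + (1/2 * (bsym b y z * χ z^2 * ‖w z - w y‖^2)
                + 1/2 * (bsym b y z * |χ z - χ y|^2 * ‖w z - w y‖^2)) := by ring
      calc P ≤ ∑ z ∈ G, ∑ y ∈ G, (bsym b y z * (χ y * χ z) * ‖w z - w y‖^2
            + (1/2 * (bsym b y z * χ z^2 * ‖w z - w y‖^2)
              + 1/2 * (bsym b y z * |χ z - χ y|^2 * ‖w z - w y‖^2))) := by
            rw [hP]
            exact Finset.sum_le_sum fun z hz => Finset.sum_le_sum fun y hy => hpt z hz y hy
        _ = Q + (1/2 * P + 1/2 * Sd) := by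
            rw [hQ, hP, hSd, Finset.mul_sum, Finset.mul_sum, ← Finset.sum_add_distrib,
              ← Finset.sum_add_distrib]
            refine Finset.sum_congr rfl fun z _ => ?_
            rw [Finset.mul_sum, Finset.mul_sum, ← Finset.sum_add_distrib,
              ← Finset.sum_add_distrib]
    linarith
  -- combine everything
  linarith [habs, hE2norm, hU21, hU1bd, hAsknorm, hU3bd, hTbd, hRbd, hPbd, hQ0, hNn0]


end CutoffKey
section CutoffVanish
open Filter
variable {V : Type*} {m : V → ℝ} {b : V → V → ℝ} {N : V → Finset V}

lemma cutoff_vanish (hm : ∀ x, 0 < m x) (hb : ∀ x y, 0 ≤ b x y)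
    (hN : ∀ x y, y ∈ N x ↔ (b x y ≠ 0 ∨ b y x ≠ 0))
    (hchi : ChiComplete m (bsym b)) (C : ℝ) (hasym : AsymCond m b C)
    (μ : ℂ) (hμ : C / 2 < μ.re) (w : V → ℂ)
    (hw : Summable fun x => m x * ‖w x‖ ^ 2)
    (heq : ∀ c, (∑ y ∈ N c, (b y c : ℂ) * (w c - w y)) + μ * (m c : ℂ) * w c = 0) :
    ∀ x, w x = 0 := by
  classical
  obtain ⟨Bn, χ, Cχ, hCχ, hmono, hBfin, hBun, hχfin, hχ01, hχB, hχbd⟩ := hchi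
  set τ : ℕ → V → ℝ :=
    fun n z => if z ∈ Bn n ∧ ∀ y ∈ N z, y ∈ Bn n then 0 else m z * ‖w z‖^2 with hτ
  have hτ0 : ∀ n z, 0 ≤ τ n z := by
    intro n z
    simp only [hτ]
    split
    · exact le_rfl
    · exact mul_nonneg (hm z).le (sq_nonneg _)
  have hτle : ∀ n z, τ n z ≤ m z * ‖w z‖^2 := by
    intro n z
    simp only [hτ]
    split
    · exact mul_nonneg (hm z).le (sq_nonneg _)
    · exact le_rfl
  have hτs : ∀ n, Summable (τ n) := fun n => Summable.of_nonneg_of_le (hτ0 n) (hτle n) hw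
  have hmemB : ∀ v : V, ∃ n, v ∈ Bn n := by
    intro v
    have : v ∈ ⋃ n, Bn n := by rw [hBun]; trivial
    exact Set.mem_iUnion.1 this
  choose φ hφ using hmemB
  have hkey : ∀ n, (μ.re - C/2) *
      (∑ z ∈ (hχfin n).toFinset ∪ (hχfin n).toFinset.biUnion N, m z * (χ n z)^2 * ‖w z‖^2)
      ≤ 3 * Cχ * ∑' z, τ n z := by
    intro n
    refine cutoff_key hm hb hN C hasym (χ n) (hχfin n) (hχ01 n) Cχ hCχ (hχbd n)
      (Bn n) (fun x hx => hχB n x hx) μ w hw heq (τ n) (hτ0 n) (hτs n) ?_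
    intro z hz
    simp only [hτ]
    rw [if_neg hz]
  have hρ0 : Tendsto (fun n => ∑' z, τ n z) atTop (nhds 0) := by
    have h : Tendsto (fun n => ∑' z, τ n z) atTop (nhds (∑' (_ : V), (0:ℝ))) := by
      apply tendsto_tsum_of_dominated_convergence (bound := fun z => m z * ‖w z‖^2) hw
      · intro z
        have hev : (fun n => τ n z) =ᶠ[atTop] (fun _ => (0:ℝ)) := by
          refine eventually_atTop.2 ⟨Finset.sup (insert z (N z)) φ, fun n hn => ?_⟩
          have hcond : z ∈ Bn n ∧ ∀ y ∈ N z, y ∈ Bn n := by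
            constructor
            · exact hmono (le_trans (Finset.le_sup (Finset.mem_insert_self z (N z))) hn) (hφ z)
            · intro y hy
              exact hmono (le_trans (Finset.le_sup (Finset.mem_insert_of_mem hy)) hn) (hφ y)
          simp only [hτ]
          rw [if_pos hcond]
        exact (tendsto_congr' hev).2 tendsto_const_nhds
      · refine Eventually.of_forall (fun n z => ?_)
        rw [Real.norm_eq_abs, abs_of_nonneg (hτ0 n z)]
        exact hτle n z
    simpa using h
  intro x
  by_contra hx
  have hwx : 0 < m x * ‖w x‖^2 := by
    have : 0 < ‖w x‖ := norm_pos_iff.2 hx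
    have := pow_pos this 2
    exact mul_pos (hm x) this
  have hμC : 0 < μ.re - C/2 := by linarith
  have hxev : ∀ᶠ n in atTop, (μ.re - C/2) * (m x * ‖w x‖^2) ≤ 3 * Cχ * ∑' z, τ n z := by
    refine eventually_atTop.2 ⟨φ x, fun n hn => ?_⟩
    have hx1 : χ n x = 1 := hχB n x (hmono hn (hφ x))
    have hxG : x ∈ (hχfin n).toFinset ∪ (hχfin n).toFinset.biUnion N :=
      Finset.mem_union_left _ ((hχfin n).mem_toFinset.2
        (by rw [Function.mem_support, hx1]; exact one_ne_zero))
    have hsingle : m x * ‖w x‖^2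
        ≤ ∑ z ∈ (hχfin n).toFinset ∪ (hχfin n).toFinset.biUnion N,
            m z * (χ n z)^2 * ‖w z‖^2 := by
      have h := Finset.single_le_sum (f := fun z => m z * (χ n z)^2 * ‖w z‖^2)
        (fun z _ => mul_nonneg (mul_nonneg (hm z).le (sq_nonneg _)) (sq_nonneg _)) hxG
      simpa [hx1] using h
    calc (μ.re - C/2) * (m x * ‖w x‖^2)
        ≤ (μ.re - C/2) * ∑ z ∈ (hχfin n).toFinset ∪ (hχfin n).toFinset.biUnion N,
            m z * (χ n z)^2 * ‖w z‖^2 := mul_le_mul_of_nonneg_left hsingle hμC.le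
      _ ≤ 3 * Cχ * ∑' z, τ n z := hkey n
  have hlim : (μ.re - C/2) * (m x * ‖w x‖^2) ≤ 3 * Cχ * 0 :=
    ge_of_tendsto (hρ0.const_mul (3 * Cχ)) hxev
  rw [mul_zero] at hlim
  have := mul_pos hμC hwx
  linarith

end CutoffVanish
section HilbertAux
open scoped ENNReal
variable {V : Type*} {m : V → ℝ} {b : V → V → ℝ} {N : V → Finset V}

lemma lapOp_add (hN : ∀ x y, y ∈ N x ↔ (b x y ≠ 0 ∨ b y x ≠ 0)) (f g : V → ℂ) (x : V) :
    lapOp m b (fun z => f z + g z) x = lapOp m b f x + lapOp m b g x := by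
  rw [lapOp_eq_sum hN, lapOp_eq_sum hN, lapOp_eq_sum hN, ← mul_add, ← Finset.sum_add_distrib]
  congr 1
  exact Finset.sum_congr rfl fun y _ => by ring

lemma lapOp_smul (hN : ∀ x y, y ∈ N x ↔ (b x y ≠ 0 ∨ b y x ≠ 0)) (c : ℂ) (f : V → ℂ) (x : V) :
    lapOp m b (fun z => c * f z) x = c * lapOp m b f x := by
  rw [lapOp_eq_sum hN, lapOp_eq_sum hN]
  rw [show ∑ y ∈ N x, (b x y : ℂ) * (c * f x - c * f y)
      = c * ∑ y ∈ N x, (b x y : ℂ) * (f x - f y) by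
    rw [Finset.mul_sum]; exact Finset.sum_congr rfl fun y _ => by ring]
  ring

lemma lapOp_zero (hN : ∀ x y, y ∈ N x ↔ (b x y ≠ 0 ∨ b y x ≠ 0)) (x : V) :
    lapOp m b (fun _ => 0) x = 0 := by
  rw [lapOp_eq_sum hN]
  simp

lemma finsupp_shift (hN : ∀ x y, y ∈ N x ↔ (b x y ≠ 0 ∨ b y x ≠ 0)) (ν : ℂ)
    {f : V → ℂ} (hf : FinSupp f) :
    FinSupp (fun x => lapOp m b f x + ν * f x) := by
  classical
  set Fs : Finset V := hf.toFinset
  set F : Finset V := Fs ∪ Fs.biUnion N with hF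
  apply Set.Finite.subset F.finite_toSet
  intro x hx
  by_contra hxF
  have hfz : f x = 0 := by
    by_contra hc
    exact hxF (Finset.mem_union_left _ (hf.mem_toFinset.2 hc))
  have hlapz : lapOp m b f x = 0 := by
    rw [lapOp_eq_sum hN]
    have : ∑ y ∈ N x, (b x y : ℂ) * (f x - f y) = 0 := by
      apply Finset.sum_eq_zero
      intro y hy
      rcases eq_or_ne (b x y) 0 with h0 | h0
      · rw [h0]; simp
      · have hyz : f y = 0 := by
          by_contra hc
          exact hxF (Finset.mem_union_right _ (Finset.mem_biUnion.2
            ⟨y, hf.mem_toFinset.2 hc, mem_N_symm hN ((hN x y).2 (Or.inl h0))⟩))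
        rw [hfz, hyz]; simp
    rw [this, mul_zero]
  have : lapOp m b f x + ν * f x = 0 := by rw [hfz, hlapz]; simp
  exact hx this

lemma summable_msq_of_finsupp {g : V → ℂ} (hg : FinSupp g) :
    Summable fun x => m x * ‖g x‖ ^ 2 := by
  classical
  apply summable_of_ne_finset_zero (s := hg.toFinset)
  intro x hx
  have : g x = 0 := by
    by_contra hc
    exact hx (hg.mem_toFinset.2 hc)
  rw [this]
  simp

lemma memlp_J (hm : ∀ x, 0 < m x) {g : V → ℂ} (h : Summable fun x => m x * ‖g x‖ ^ 2) :
    Memℓp (fun x => ((Real.sqrt (m x) : ℝ) : ℂ) * g x) 2 := by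
  apply memℓp_gen
  have he : (fun i => ‖((Real.sqrt (m i) : ℝ) : ℂ) * g i‖ ^ (2 : ℝ≥0∞).toReal)
      = fun i => m i * ‖g i‖ ^ 2 := by
    funext i
    rw [show (2 : ℝ≥0∞).toReal = (2 : ℝ) by norm_num]
    rw [show ((2:ℝ)) = ((2:ℕ) : ℝ) by norm_num, Real.rpow_natCast]
    rw [norm_mul, Complex.norm_real (Real.sqrt (m i)), Real.norm_eq_abs (Real.sqrt (m i)),
      abs_of_nonneg (Real.sqrt_nonneg _), mul_pow, Real.sq_sqrt (hm i).le]
  rw [he]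
  exact h

lemma Hnorm_sq (x : lp (fun _ : V => ℂ) 2) : ‖x‖ ^ 2 = ∑' i, ‖x i‖ ^ 2 := by
  have h := lp.norm_rpow_eq_tsum (p := 2) (by norm_num) x
  rw [show (2 : ℝ≥0∞).toReal = (2 : ℝ) by norm_num] at h
  rw [show ((2:ℝ)) = ((2:ℕ) : ℝ) by norm_num] at h
  simp only [Real.rpow_natCast] at h
  exact_mod_cast h

lemma summable_norm_sq_H (u : lp (fun _ : V => ℂ) 2) : Summable fun z => ‖u z‖ ^ 2 := by
  have h := lp.memℓp u
  rw [memℓp_gen_iff (by norm_num : 0 < (2 : ℝ≥0∞).toReal)] at h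
  have he : (fun i => ‖u i‖ ^ (2 : ℝ≥0∞).toReal) = fun i => ‖u i‖ ^ 2 := by
    funext i
    rw [show (2 : ℝ≥0∞).toReal = (2 : ℝ) by norm_num,
      show ((2:ℝ)) = ((2:ℕ) : ℝ) by norm_num, Real.rpow_natCast]
  rwa [he] at h

end HilbertAux
section Delta
variable {V : Type*} {m : V → ℝ} {b : V → V → ℝ} {N : V → Finset V}

lemma lap_delta [DecidableEq V] (hN : ∀ x y, y ∈ N x ↔ (b x y ≠ 0 ∨ b y x ≠ 0)) (hloop : ∀ x, b x x = 0)
    (c z : V) :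
    lapOp m b (fun t => if t = c then 1 else 0) z
    = (1 / (m z : ℂ)) * ((if z = c then (∑ y ∈ N c, (b c y : ℂ)) else 0) - (b z c : ℂ)) := by
  classical
  rw [lapOp_eq_sum hN]
  congr 1
  have h1 : ∑ y ∈ N z, (b z y : ℂ) * ((if z = c then (1:ℂ) else 0) - (if y = c then (1:ℂ) else 0))
      = (if z = c then (1:ℂ) else 0) * (∑ y ∈ N z, (b z y : ℂ))
        - ∑ y ∈ N z, (b z y : ℂ) * (if y = c then (1:ℂ) else 0) := by
    rw [Finset.mul_sum, ← Finset.sum_sub_distrib]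
    exact Finset.sum_congr rfl fun y _ => by ring
  rw [h1]
  have h2 : ∑ y ∈ N z, (b z y : ℂ) * (if y = c then (1:ℂ) else 0) = (b z c : ℂ) := by
    have : ∀ y ∈ N z, (b z y : ℂ) * (if y = c then (1:ℂ) else 0)
        = if y = c then (b z y : ℂ) else 0 := by
      intro y _
      split <;> simp
    rw [Finset.sum_congr rfl this, Finset.sum_ite_eq']
    by_cases hc : c ∈ N z
    · rw [if_pos hc]
    · rw [if_neg hc, bzero_of_not_mem hN hc]
      simp
  rw [h2]
  by_cases hz : z = c
  · subst hz
    rw [if_pos rfl, if_pos rfl, one_mul]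
  · rw [if_neg hz, if_neg hz, zero_mul]

lemma orth_to_eq (hm : ∀ x, 0 < m x) (hloop : ∀ x, b x x = 0) (hK : Kirchhoff b)
    (hN : ∀ x y, y ∈ N x ↔ (b x y ≠ 0 ∨ b y x ≠ 0)) (ν : ℂ) (u : V → ℂ)
    (horth : ∀ f : V → ℂ, FinSupp f →
      (∑' z, (starRingEnd ℂ) (((Real.sqrt (m z) : ℝ) : ℂ) * (lapOp m b f z + ν * f z)) * u z)
        = 0)
    (c : V) :
    (∑ y ∈ N c, (b y c : ℂ) * (u c / ((Real.sqrt (m c) : ℝ) : ℂ)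
        - u y / ((Real.sqrt (m y) : ℝ) : ℂ)))
      + (starRingEnd ℂ) ν * (m c : ℂ) * (u c / ((Real.sqrt (m c) : ℝ) : ℂ)) = 0 := by
  classical
  set w : V → ℂ := fun z => u z / ((Real.sqrt (m z) : ℝ) : ℂ) with hw
  set δ : V → ℂ := fun t => if t = c then 1 else 0 with hδ
  have hδfin : FinSupp δ := by
    apply Set.Finite.subset (Set.finite_singleton c)
    intro t ht
    by_contra hc
    apply ht
    rw [hδ]
    simp only [Set.mem_singleton_iff] at hc
    simp [hc]
  have h0 := horth δ hδfin
  have hcN : c ∉ N c := by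
    intro hc
    rcases (hN c c).1 hc with h | h <;> exact h (hloop c)
  have hsq : ∀ z, ((m z : ℝ) : ℂ)
      = ((Real.sqrt (m z) : ℝ) : ℂ) * ((Real.sqrt (m z) : ℝ) : ℂ) := by
    intro z
    rw [← Complex.ofReal_mul, Real.mul_self_sqrt (hm z).le]
  have hs0 : ∀ z, ((Real.sqrt (m z) : ℝ) : ℂ) ≠ 0 := by
    intro z
    exact Complex.ofReal_ne_zero.2 (Real.sqrt_pos.2 (hm z)).ne'
  have hm0 : ∀ z, ((m z : ℝ) : ℂ) ≠ 0 := fun z => Complex.ofReal_ne_zero.2 (hm z).ne'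
  have hvanish : ∀ z ∉ insert c (N c),
      (starRingEnd ℂ) (((Real.sqrt (m z) : ℝ) : ℂ) * (lapOp m b δ z + ν * δ z)) * u z = 0 := by
    intro z hz
    have hzc : z ≠ c := fun h => hz (h ▸ Finset.mem_insert_self c (N c))
    have hzNc : z ∉ N c := fun h => hz (Finset.mem_insert_of_mem h)
    have hδz : δ z = 0 := by rw [hδ]; simp [hzc]
    have hbzc : b z c = 0 := bzero_of_not_mem' hN hzNc
    have hlz : lapOp m b δ z = 0 := by
      rw [lap_delta hN hloop c z, if_neg hzc, hbzc]
      simp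
    rw [hδz, hlz]
    simp
  rw [tsum_eq_sum hvanish, Finset.sum_insert hcN] at h0
  -- evaluate the term at c
  have hδc : δ c = 1 := by rw [hδ]; simp
  have hlapc : lapOp m b δ c = (((∑ y ∈ N c, b c y) / m c : ℝ) : ℂ) := by
    rw [lap_delta hN hloop c c, if_pos rfl, hloop c]
    push_cast
    ring
  have hKf : ((∑ y ∈ N c, b c y : ℝ) : ℂ) = ∑ y ∈ N c, (b y c : ℂ) := by
    rw [kirchhoff_fin hN hK c]
    push_cast
    rfl
  have hterm1 : (starRingEnd ℂ) (((Real.sqrt (m c) : ℝ) : ℂ) * (lapOp m b δ c + ν * δ c)) * u c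
      = (∑ y ∈ N c, (b y c : ℂ)) * w c + (starRingEnd ℂ) ν * (m c : ℂ) * w c := by
    rw [hlapc, hδc, mul_one, map_mul, map_add, Complex.conj_ofReal, Complex.conj_ofReal, hw]
    simp only
    rw [show (((∑ y ∈ N c, b c y) / m c : ℝ) : ℂ)
        = ((∑ y ∈ N c, b c y : ℝ) : ℂ) / ((m c : ℝ) : ℂ) by push_cast; ring, hKf]
    rw [hsq c]
    have h1 := hs0 c
    field_simp
  -- evaluate the terms over N c
  have hterm2 : ∀ z ∈ N c,
      (starRingEnd ℂ) (((Real.sqrt (m z) : ℝ) : ℂ) * (lapOp m b δ z + ν * δ z)) * u z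
      = -((b z c : ℂ) * w z) := by
    intro z hz
    have hzc : z ≠ c := fun h => hcN (h ▸ hz)
    have hδz : δ z = 0 := by rw [hδ]; simp [hzc]
    have hlapz : lapOp m b δ z = ((-(b z c) / m z : ℝ) : ℂ) := by
      rw [lap_delta hN hloop c z, if_neg hzc]
      push_cast
      ring
    rw [hδz, hlapz, mul_zero, add_zero, map_mul, Complex.conj_ofReal, Complex.conj_ofReal, hw]
    simp only
    rw [show ((-(b z c) / m z : ℝ) : ℂ) = -((b z c : ℝ) : ℂ) / ((m z : ℝ) : ℂ) by push_cast; ring]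
    rw [hsq z]
    have h1 := hs0 z
    field_simp
  rw [hterm1, Finset.sum_congr rfl hterm2] at h0
  have hgoal : ∑ y ∈ N c, (b y c : ℂ) * (w c - w y)
      = (∑ y ∈ N c, (b y c : ℂ)) * w c - ∑ y ∈ N c, (b y c : ℂ) * w y := by
    rw [Finset.sum_mul, ← Finset.sum_sub_distrib]
    exact Finset.sum_congr rfl fun y _ => by ring
  rw [show (∑ y ∈ N c, (b y c : ℂ) * (u c / ((Real.sqrt (m c) : ℝ) : ℂ)
        - u y / ((Real.sqrt (m y) : ℝ) : ℂ)))
      = ∑ y ∈ N c, (b y c : ℂ) * (w c - w y) from rfl, hgoal]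
  rw [Finset.sum_neg_distrib] at h0
  linear_combination h0
end Delta
section Main
set_option maxHeartbeats 1000000
open scoped ENNReal
variable {V : Type*}

local notation "⟪" x ", " y "⟫" => @inner ℂ _ _ x y

/-- The range of `Δ + ν` on `C_c`, inside `ℓ²`, as a submodule. -/
def ranSub (m : V → ℝ) (b : V → V → ℝ) (N : V → Finset V)
    (hN : ∀ x y, y ∈ N x ↔ (b x y ≠ 0 ∨ b y x ≠ 0)) (ν : ℂ) :
    Submodule ℂ (lp (fun _ : V => ℂ) 2) where
  carrier := {x | ∃ f : V → ℂ, FinSupp f ∧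
    (⇑x : ∀ _ : V, ℂ) = fun z => ((Real.sqrt (m z) : ℝ) : ℂ) * (lapOp m b f z + ν * f z)}
  add_mem' := by
    rintro x y ⟨f, hf, hx⟩ ⟨g, hg, hy⟩
    refine ⟨fun z => f z + g z, Set.Finite.subset (hf.union hg) ?_, ?_⟩
    · intro z hz
      simp only [Function.mem_support] at hz
      by_contra hc
      simp only [Set.mem_union, Function.mem_support, not_or, not_not] at hc
      exact hz (by rw [hc.1, hc.2, add_zero])
    · rw [lp.coeFn_add, hx, hy]
      funext z
      simp only [Pi.add_apply]
      rw [lapOp_add hN]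
      ring
  zero_mem' := by
    refine ⟨fun _ => 0, by simp [FinSupp], ?_⟩
    rw [lp.coeFn_zero]
    funext z
    rw [lapOp_zero hN]
    simp
  smul_mem' := by
    rintro c x ⟨f, hf, hx⟩
    refine ⟨fun z => c * f z, Set.Finite.subset hf ?_, ?_⟩
    · intro z hz
      simp only [Function.mem_support] at hz ⊢
      intro h0
      exact hz (by rw [h0, mul_zero])
    · rw [lp.coeFn_smul, hx]
      funext z
      simp only [Pi.smul_apply, smul_eq_mul]
      rw [lapOp_smul hN]
      ring

variable {m : V → ℝ} {b : V → V → ℝ} {N : V → Finset V}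

lemma base_orth (hm : ∀ x, 0 < m x) (hb : ∀ x y, 0 ≤ b x y) (hloop : ∀ x, b x x = 0)
    (hK : Kirchhoff b) (hN : ∀ x y, y ∈ N x ↔ (b x y ≠ 0 ∨ b y x ≠ 0))
    (hchi : ChiComplete m (bsym b)) (C : ℝ) (hasym : AsymCond m b C)
    (ν : ℂ) (hν : C/2 < ν.re) :
    (ranSub m b N hN ν)ᗮ = ⊥ := by
  rw [Submodule.eq_bot_iff]
  intro u hu
  have horth : ∀ f : V → ℂ, FinSupp f →
      (∑' z, (starRingEnd ℂ) (((Real.sqrt (m z) : ℝ) : ℂ) * (lapOp m b f z + ν * f z)) * u z)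
        = 0 := by
    intro f hf
    have hmem : Memℓp (fun z => ((Real.sqrt (m z) : ℝ) : ℂ) * (lapOp m b f z + ν * f z)) 2 :=
      memlp_J hm (summable_msq_of_finsupp (finsupp_shift hN ν hf))
    have hxS : (⟨_, hmem⟩ : lp (fun _ : V => ℂ) 2) ∈ ranSub m b N hN ν := ⟨f, hf, rfl⟩
    have h0 := (Submodule.mem_orthogonal _ u).1 hu _ hxS
    rw [lp.inner_eq_tsum] at h0
    simp only [RCLike.inner_apply'] at h0
    exact h0
  set w : V → ℂ := fun z => u z / ((Real.sqrt (m z) : ℝ) : ℂ) with hwdef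
  have hs0 : ∀ z, ((Real.sqrt (m z) : ℝ) : ℂ) ≠ 0 := fun z =>
    Complex.ofReal_ne_zero.2 (Real.sqrt_pos.2 (hm z)).ne'
  have hwsum : Summable (fun z => m z * ‖w z‖ ^ 2) := by
    have h1 := summable_norm_sq_H u
    refine h1.congr fun z => ?_
    rw [hwdef]
    simp only
    rw [norm_div, Complex.norm_real (Real.sqrt (m z)), Real.norm_eq_abs (Real.sqrt (m z)),
      abs_of_nonneg (Real.sqrt_nonneg _), div_pow, Real.sq_sqrt (hm z).le]
    rw [mul_div_cancel₀ _ (hm z).ne']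
  have heqn := orth_to_eq hm hloop hK hN ν (fun z => u z) horth
  have hμ : C/2 < ((starRingEnd ℂ) ν).re := by simpa [Complex.conj_re] using hν
  have hw0 := cutoff_vanish hm hb hN hchi C hasym ((starRingEnd ℂ) ν) hμ w hwsum heqn
  apply lp.ext
  funext z
  have h := hw0 z
  rw [hwdef] at h
  simp only at h
  have : u z = 0 := by
    have := div_eq_zero_iff.1 h
    rcases this with h1 | h1
    · exact h1
    · exact absurd h1 (hs0 z)
  simpa using this

lemma orth_bot_all (hm : ∀ x, 0 < m x) (hb : ∀ x y, 0 ≤ b x y) (hloop : ∀ x, b x x = 0)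
    (hK : Kirchhoff b) (hN : ∀ x y, y ∈ N x ↔ (b x y ≠ 0 ∨ b y x ≠ 0))
    (hchi : ChiComplete m (bsym b)) (C : ℝ) (hC : 0 < C) (hasym : AsymCond m b C)
    (ν : ℂ) (hν : 0 < ν.re) :
    (ranSub m b N hN ν)ᗮ = ⊥ := by
  set R : ℝ := max (C/2 + 1) ((‖ν‖)^2/(2*ν.re) + 1) with hRdef
  have hR1 : C/2 < R := lt_of_lt_of_le (by linarith) (le_max_left _ _)
  have hRpos : 0 < R := by linarith
  have hq : ‖(R : ℂ) - ν‖ < R := by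
    have hv : (‖ν‖)^2 = ν.re^2 + ν.im^2 := by
      rw [Complex.sq_norm, Complex.normSq_apply]; ring
    have hRge : (‖ν‖)^2/(2*ν.re) + 1 ≤ R := le_max_right _ _
    have hnorm : ‖(R : ℂ) - ν‖^2 = (R - ν.re)^2 + ν.im^2 := by
      rw [Complex.sq_norm, Complex.normSq_apply]
      simp [Complex.sub_re, Complex.sub_im, Complex.ofReal_re, Complex.ofReal_im]
      ring
    have h3 : (‖ν‖)^2 < 2*R*ν.re := by
      have h4 : (‖ν‖)^2/(2*ν.re) < R := by linarith
      calc (‖ν‖)^2 = ((‖ν‖)^2/(2*ν.re)) * (2*ν.re) := by field_simp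
        _ < R * (2*ν.re) := by
            apply mul_lt_mul_of_pos_right h4
            linarith
        _ = 2*R*ν.re := by ring
    have h2 : ‖(R : ℂ) - ν‖^2 < R^2 := by
      rw [hnorm]; nlinarith
    by_contra hcon
    push_neg at hcon
    nlinarith [norm_nonneg ((R : ℂ) - ν)]
  have hbase : (ranSub m b N hN (R : ℂ))ᗮ = ⊥ :=
    base_orth hm hb hloop hK hN hchi C hasym (R : ℂ) (by simpa using hR1)
  have hdense : (ranSub m b N hN (R : ℂ)).topologicalClosure = ⊤ :=
    Submodule.topologicalClosure_eq_top_iff.2 hbase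
  rw [Submodule.eq_bot_iff]
  intro u hu
  by_contra hu0
  have hn : 0 < ‖u‖ := norm_pos_iff.2 hu0
  set q : ℝ := ‖(R : ℂ) - ν‖ / R with hqdef
  have hq1 : q < 1 := (div_lt_one hRpos).2 hq
  have hq0 : 0 ≤ q := div_nonneg (norm_nonneg _) hRpos.le
  set η : ℝ := (1 - q) * ‖u‖ / (2 * (1 + q)) with hηdef
  have hηpos : 0 < η := by
    apply div_pos (mul_pos (by linarith) hn) (by linarith)
  -- approximate u from the dense range at R
  have humem : u ∈ closure ((ranSub m b N hN (R : ℂ) : Set (lp (fun _ : V => ℂ) 2))) := by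
    have h1 : u ∈ (ranSub m b N hN (R : ℂ)).topologicalClosure := by
      rw [hdense]; trivial
    exact h1
  obtain ⟨x, hxS, hxu⟩ := Metric.mem_closure_iff.1 humem η hηpos
  rw [dist_eq_norm] at hxu
  obtain ⟨f, hf, hxf⟩ := hxS
  have hmem1 : Memℓp (fun z => ((Real.sqrt (m z) : ℝ) : ℂ) * (lapOp m b f z + ν * f z)) 2 :=
    memlp_J hm (summable_msq_of_finsupp (finsupp_shift hN ν hf))
  have hmem2 : Memℓp (fun z => ((Real.sqrt (m z) : ℝ) : ℂ) * f z) 2 :=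
    memlp_J hm (summable_msq_of_finsupp hf)
  set xν : lp (fun _ : V => ℂ) 2 := ⟨_, hmem1⟩ with hxν
  set jf : lp (fun _ : V => ℂ) 2 := ⟨_, hmem2⟩ with hjfdef
  have hxdec : x = xν + ((R : ℂ) - ν) • jf := by
    apply lp.ext
    rw [lp.coeFn_add, lp.coeFn_smul, hxf]
    funext z
    simp only [Pi.add_apply, Pi.smul_apply, smul_eq_mul]
    show ((Real.sqrt (m z) : ℝ) : ℂ) * (lapOp m b f z + (R : ℂ) * f z)
        = ((Real.sqrt (m z) : ℝ) : ℂ) * (lapOp m b f z + ν * f z)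
          + ((R : ℂ) - ν) * (((Real.sqrt (m z) : ℝ) : ℂ) * f z)
    ring
  have hxνS : xν ∈ ranSub m b N hN ν := ⟨f, hf, rfl⟩
  have hinner_x : ⟪x, u⟫ = (starRingEnd ℂ) ((R : ℂ) - ν) * ⟪jf, u⟫ := by
    rw [hxdec, inner_add_left, inner_smul_left]
    rw [(Submodule.mem_orthogonal _ u).1 hu xν hxνS, zero_add]
  -- a priori bound at R
  have hapr := apriori_bound hm hb hK hN (R : ℂ) (by simpa using hRpos) f hf
  have hjf : ‖jf‖^2 = l2normSq m f := by
    rw [Hnorm_sq]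
    unfold l2normSq
    apply tsum_congr
    intro z
    show ‖((Real.sqrt (m z) : ℝ) : ℂ) * f z‖^2 = m z * ‖f z‖^2
    rw [norm_mul, Complex.norm_real (Real.sqrt (m z)), Real.norm_eq_abs (Real.sqrt (m z)),
      abs_of_nonneg (Real.sqrt_nonneg _), mul_pow, Real.sq_sqrt (hm z).le]
  have hx2 : ‖x‖^2 = l2normSq m (fun z => lapOp m b f z + (R : ℂ) * f z) := by
    rw [Hnorm_sq]
    unfold l2normSq
    apply tsum_congr
    intro z
    rw [show (⇑x : ∀ _ : V, ℂ) z = ((Real.sqrt (m z) : ℝ) : ℂ)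
        * (lapOp m b f z + (R : ℂ) * f z) from congrFun hxf z]
    rw [norm_mul, Complex.norm_real (Real.sqrt (m z)), Real.norm_eq_abs (Real.sqrt (m z)),
      abs_of_nonneg (Real.sqrt_nonneg _), mul_pow, Real.sq_sqrt (hm z).le]
  have hRjf : R * ‖jf‖ ≤ ‖x‖ := by
    have h1 : (R*‖jf‖)^2 ≤ ‖x‖^2 := by
      rw [mul_pow, hjf, hx2]
      have : ((R : ℂ)).re = R := Complex.ofReal_re R
      calc R^2 * l2normSq m f = ((R:ℂ)).re^2 * l2normSq m f := by rw [this]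
        _ ≤ l2normSq m (fun z => lapOp m b f z + (R : ℂ) * f z) := hapr
    exact le_of_pow_le_pow_left₀ two_ne_zero (norm_nonneg x) h1
  have hxle : ‖x‖ ≤ ‖u‖ + η := by
    calc ‖x‖ = ‖u - (u - x)‖ := by rw [sub_sub_cancel]
      _ ≤ ‖u‖ + ‖u - x‖ := norm_sub_le _ _
      _ ≤ ‖u‖ + η := by linarith
  have hjfle : ‖jf‖ ≤ (‖u‖ + η)/R := by
    rw [le_div_iff₀ hRpos]
    calc ‖jf‖ * R = R * ‖jf‖ := by ring
      _ ≤ ‖x‖ := hRjf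
      _ ≤ ‖u‖ + η := hxle
  have hkey : ‖u‖^2 ≤ η*‖u‖ + q*(‖u‖+η)*‖u‖ := by
    have e0 : ⟪u, u⟫ = ((‖u‖^2 : ℝ) : ℂ) := by
      rw [inner_self_eq_norm_sq_to_K]
      norm_cast
    have e1 : ‖u‖^2 = ‖⟪u, u⟫‖ := by
      rw [e0]
      rw [Complex.norm_real, Real.norm_eq_abs, abs_of_nonneg (sq_nonneg _)]
    have e2 : ⟪u, u⟫ = ⟪u - x, u⟫ + ⟪x, u⟫ := by
      rw [← inner_add_left, sub_add_cancel]
    have c1 := norm_inner_le_norm (𝕜 := ℂ) (u - x) u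
    have c3 := norm_inner_le_norm (𝕜 := ℂ) jf u
    have c2 : ‖⟪x, u⟫‖ ≤ ‖(R : ℂ) - ν‖ * (‖jf‖ * ‖u‖) := by
      rw [hinner_x, norm_mul, RCLike.norm_conj]
      exact mul_le_mul_of_nonneg_left c3 (norm_nonneg _)
    have c4 : ‖(R : ℂ) - ν‖ * (‖jf‖ * ‖u‖) ≤ ‖(R : ℂ) - ν‖ * (((‖u‖ + η)/R) * ‖u‖) := by
      apply mul_le_mul_of_nonneg_left _ (norm_nonneg _)
      exact mul_le_mul_of_nonneg_right hjfle (norm_nonneg _)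
    have c5 : ‖(R : ℂ) - ν‖ * (((‖u‖ + η)/R) * ‖u‖) = q*(‖u‖+η)*‖u‖ := by
      rw [hqdef]
      field_simp
    have c6 : ‖u - x‖ * ‖u‖ ≤ η * ‖u‖ :=
      mul_le_mul_of_nonneg_right hxu.le (norm_nonneg _)
    calc ‖u‖^2 = ‖⟪u - x, u⟫ + ⟪x, u⟫‖ := by rw [e1, ← e2]
      _ ≤ ‖⟪u - x, u⟫‖ + ‖⟪x, u⟫‖ := norm_add_le _ _
      _ ≤ η*‖u‖ + q*(‖u‖+η)*‖u‖ := by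
          rw [← c5]
          linarith
  have hηeq : η * (2*(1+q)) = (1-q)*‖u‖ := by
    rw [hηdef]
    field_simp
  have e1 : η*‖u‖ + q*(‖u‖+η)*‖u‖ = η*‖u‖*(1+q) + q*‖u‖^2 := by ring
  have e2 : η*‖u‖*(2*(1+q)) = (1-q)*‖u‖^2 := by
    calc η*‖u‖*(2*(1+q)) = (η*(2*(1+q)))*‖u‖ := by ring
      _ = ((1-q)*‖u‖)*‖u‖ := by rw [hηeq]
      _ = (1-q)*‖u‖^2 := by ring
  have e3 : (1-q)*‖u‖^2 ≤ η*‖u‖*(1+q) := by linarith [hkey, e1]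
  have e5 : 0 < (1-q)*‖u‖^2 := mul_pos (by linarith) (by positivity)
  linarith [e2, e3, e5]

end Main
section Final
set_option maxHeartbeats 1000000
open scoped ENNReal
variable {V : Type*} {m : V → ℝ} {b : V → V → ℝ} {N : V → Finset V}

lemma density_final (hm : ∀ x, 0 < m x) (hb : ∀ x y, 0 ≤ b x y) (hloop : ∀ x, b x x = 0)
    (hK : Kirchhoff b) (hN : ∀ x y, y ∈ N x ↔ (b x y ≠ 0 ∨ b y x ≠ 0))
    (hchi : ChiComplete m (bsym b)) (C : ℝ) (hC : 0 < C) (hasym : AsymCond m b C)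
    (ν : ℂ) (hν : 0 < ν.re) (v : V → ℂ) (hv : MemL2 m v) (ε : ℝ) (hε : 0 < ε) :
    ∃ f : V → ℂ, FinSupp f ∧ l2normSq m (fun x => lapOp m b f x + ν * f x - v x) < ε := by
  have hbot := orth_bot_all hm hb hloop hK hN hchi C hC hasym ν hν
  have hdense : (ranSub m b N hN ν).topologicalClosure = ⊤ :=
    Submodule.topologicalClosure_eq_top_iff.2 hbot
  have hmemv : Memℓp (fun z => ((Real.sqrt (m z) : ℝ) : ℂ) * v z) 2 := memlp_J hm hv
  set jv : lp (fun _ : V => ℂ) 2 := ⟨_, hmemv⟩ with hjv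
  have humem : jv ∈ closure ((ranSub m b N hN ν : Set (lp (fun _ : V => ℂ) 2))) := by
    have h1 : jv ∈ (ranSub m b N hN ν).topologicalClosure := by rw [hdense]; trivial
    exact h1
  have hsε : 0 < Real.sqrt ε := Real.sqrt_pos.2 hε
  obtain ⟨x, hxS, hxd⟩ := Metric.mem_closure_iff.1 humem (Real.sqrt ε) hsε
  obtain ⟨f, hf, hxf⟩ := hxS
  refine ⟨f, hf, ?_⟩
  rw [dist_eq_norm] at hxd
  have hnorm : l2normSq m (fun z => lapOp m b f z + ν * f z - v z) = ‖jv - x‖^2 := by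
    rw [Hnorm_sq]
    unfold l2normSq
    apply tsum_congr
    intro z
    rw [show ((jv - x : lp (fun _ : V => ℂ) 2) : ∀ _ : V, ℂ) z = jv z - x z from by
      rw [lp.coeFn_sub]; rfl]
    rw [show (⇑x : ∀ _ : V, ℂ) z
        = ((Real.sqrt (m z) : ℝ) : ℂ) * (lapOp m b f z + ν * f z) from congrFun hxf z]
    rw [show (⇑jv : ∀ _ : V, ℂ) z = ((Real.sqrt (m z) : ℝ) : ℂ) * v z from rfl]
    rw [show ((Real.sqrt (m z) : ℝ) : ℂ) * v z
        - ((Real.sqrt (m z) : ℝ) : ℂ) * (lapOp m b f z + ν * f z)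
        = ((Real.sqrt (m z) : ℝ) : ℂ) * (v z - (lapOp m b f z + ν * f z)) from by ring]
    rw [norm_mul, Complex.norm_real (Real.sqrt (m z)), Real.norm_eq_abs (Real.sqrt (m z)),
      abs_of_nonneg (Real.sqrt_nonneg _), mul_pow, Real.sq_sqrt (hm z).le]
    show m z * ‖lapOp m b f z + ν * f z - v z‖ ^ 2
        = m z * ‖v z - (lapOp m b f z + ν * f z)‖ ^ 2
    rw [show lapOp m b f z + ν * f z - v z = -(v z - (lapOp m b f z + ν * f z)) from by ring,
      norm_neg]
  rw [hnorm]
  calc ‖jv - x‖^2 < (Real.sqrt ε)^2 := by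
        apply pow_lt_pow_left₀ hxd (norm_nonneg _)
        norm_num
    _ = ε := Real.sq_sqrt hε.le

end Final

/-- if the symmetrized graph `(G,m,b')` is χ-complete and the asymmetry
condition holds, then the closure of the non-symmetric Laplacian `Δ` is m-accretive. -/
theorem stmt6 [Infinite V] (m : V → ℝ) (b : V → V → ℝ) (hm : ∀ x, 0 < m x)
    (hb : ∀ x y, 0 ≤ b x y) (hloop : ∀ x, b x x = 0) (hlf : LocFinGraph b)
    (hconn : WeaklyConnected b) (hK : Kirchhoff b)
    (hchi : ChiComplete m (bsym b))
    (C : ℝ) (hC : 0 < C) (hasym : AsymCond m b C) :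
    IsMAccretiveClosure m (lapOp m b) := by
  classical
  set N : V → Finset V := fun x => (hlf x).toFinset with hNdef
  have hN : ∀ x y, y ∈ N x ↔ (b x y ≠ 0 ∨ b y x ≠ 0) := fun x y => (hlf x).mem_toFinset
  intro l hl
  exact ⟨fun f hf => apriori_bound hm hb hK hN l hl f hf,
    fun v hv ε hε => density_final hm hb hloop hK hN hchi C hC hasym l hl v hv ε hε⟩
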